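/- arXiv:2210.13114 — 8 statements merged into one kernel-verified Lean document; each statement's English description precedes it below -/
import Mathlib

section
/- Suppose all parameters are positive, ρ ∈ (0,1), and define R_c = (βS₀/(σ+ε+μ))·(σ/(α+μ) + σ(1-ρ)α/((α+μ)(γ₂+φ₂+μ)) + εω/(γ₃+μ)) with S₀ = Λ/μ. If R_c > 1, then there exists a unique positive value E₁* > 0, namely E₁* = Λβ(R_c - 1)/(β(σ+ε+μ)R_c), such that the equilibrium equations of the SEIAR system admit a solution with all seven components strictly positive. -/
set_option maxHeartbeats 1000000 in
theorem endemic_equilibrium_exists_unique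
    (Λ μ β σ ε α ω ρ γ₁ γ₂ γ₃ φ₁ φ₂ : ℝ)
    (hΛ : 0 < Λ) (hμ : 0 < μ) (hβ : 0 < β) (hσ : 0 < σ) (hε : 0 < ε)
    (hα : 0 < α) (hω : 0 < ω) (hρ : 0 < ρ) (hρ1 : ρ < 1)
    (hγ₁ : 0 < γ₁) (hγ₂ : 0 < γ₂) (hγ₃ : 0 < γ₃) (hφ₁ : 0 < φ₁) (hφ₂ : 0 < φ₂)
    (S₀ Rc : ℝ) (hS₀ : S₀ = Λ / μ)
    (hRc : Rc = β * S₀ / (σ + ε + μ) *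
      (σ / (α + μ) + σ * (1 - ρ) * α / ((α + μ) * (γ₂ + φ₂ + μ)) + ε * ω / (γ₃ + μ)))
    (hRc1 : 1 < Rc)
    (isEquil : ℝ → ℝ → ℝ → ℝ → ℝ → ℝ → ℝ → Prop)
    (hEquil : ∀ S E₁ E₂ I₁ I₂ A R : ℝ, isEquil S E₁ E₂ I₁ I₂ A R ↔
        (0 = Λ - β * S * (E₂ + I₂ + ω * A) - μ * S ∧
         0 = β * S * (E₂ + I₂ + ω * A) - (σ + ε + μ) * E₁ ∧
         0 = σ * E₁ - (α + μ) * E₂ ∧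
         0 = ρ * α * E₂ - (γ₁ + φ₁ + μ) * I₁ ∧
         0 = (1 - ρ) * α * E₂ - (γ₂ + φ₂ + μ) * I₂ ∧
         0 = ε * E₁ - (γ₃ + μ) * A ∧
         0 = γ₁ * I₁ + γ₂ * I₂ + γ₃ * A - μ * R)) :
    (0 < Λ * β * (Rc - 1) / (β * (σ + ε + μ) * Rc)) ∧
    (∃ S E₂ I₁ I₂ A R : ℝ, 0 < S ∧ 0 < E₂ ∧ 0 < I₁ ∧ 0 < I₂ ∧ 0 < A ∧ 0 < R ∧
      isEquil S (Λ * β * (Rc - 1) / (β * (σ + ε + μ) * Rc)) E₂ I₁ I₂ A R) ∧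
    (∀ S E₁ E₂ I₁ I₂ A R : ℝ,
      0 < S → 0 < E₁ → 0 < E₂ → 0 < I₁ → 0 < I₂ → 0 < A → 0 < R →
      isEquil S E₁ E₂ I₁ I₂ A R →
      E₁ = Λ * β * (Rc - 1) / (β * (σ + ε + μ) * Rc)) := by
  subst hS₀
  subst hRc
  have hαμ : (0:ℝ) < α + μ := by linarith
  have hk : (0:ℝ) < σ + ε + μ := by linarith
  have hI1d : (0:ℝ) < γ₁ + φ₁ + μ := by linarith
  have hI2d : (0:ℝ) < γ₂ + φ₂ + μ := by linarith
  have hAd : (0:ℝ) < γ₃ + μ := by linarith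
  have h1ρ : (0:ℝ) < 1 - ρ := by linarith
  set c : ℝ := σ / (α + μ) + σ * (1 - ρ) * α / ((α + μ) * (γ₂ + φ₂ + μ)) + ε * ω / (γ₃ + μ)
    with hcdef
  have hcpos : 0 < c := by
    rw [hcdef]
    have h2 : 0 < σ * (1 - ρ) * α / ((α + μ) * (γ₂ + φ₂ + μ)) :=
      div_pos (mul_pos (mul_pos hσ h1ρ) hα) (mul_pos hαμ hI2d)
    have h3 : 0 < ε * ω / (γ₃ + μ) := div_pos (mul_pos hε hω) hAd
    have h1 : 0 < σ / (α + μ) := div_pos hσ hαμ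
    linarith
  set RC : ℝ := β * (Λ / μ) / (σ + ε + μ) * c with hRCdef
  have hRCpos : 0 < RC := by linarith
  have hRC1 : 0 < RC - 1 := by linarith
  set X : ℝ := Λ * β * (RC - 1) / (β * (σ + ε + μ) * RC) with hX
  have hXpos : 0 < X := by
    rw [hX]
    exact div_pos (mul_pos (mul_pos hΛ hβ) hRC1) (mul_pos (mul_pos hβ hk) hRCpos)
  have hc2 : c = μ * RC * (σ + ε + μ) / (β * Λ) := by
    rw [hRCdef]; field_simp
  clear_value c RC X
  refine ⟨hXpos, ?_, ?_⟩
  · refine ⟨Λ / (μ * RC), σ * X / (α + μ),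
      ρ * α * (σ * X / (α + μ)) / (γ₁ + φ₁ + μ),
      (1 - ρ) * α * (σ * X / (α + μ)) / (γ₂ + φ₂ + μ),
      ε * X / (γ₃ + μ),
      (γ₁ * (ρ * α * (σ * X / (α + μ)) / (γ₁ + φ₁ + μ)) +
       γ₂ * ((1 - ρ) * α * (σ * X / (α + μ)) / (γ₂ + φ₂ + μ)) +
       γ₃ * (ε * X / (γ₃ + μ))) / μ, ?_, ?_, ?_, ?_, ?_, ?_, ?_⟩
    · exact div_pos hΛ (mul_pos hμ hRCpos)
    · exact div_pos (mul_pos hσ hXpos) hαμ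
    · exact div_pos (mul_pos (mul_pos hρ hα) (div_pos (mul_pos hσ hXpos) hαμ)) hI1d
    · exact div_pos (mul_pos (mul_pos h1ρ hα) (div_pos (mul_pos hσ hXpos) hαμ)) hI2d
    · exact div_pos (mul_pos hε hXpos) hAd
    · have t1 : 0 < γ₁ * (ρ * α * (σ * X / (α + μ)) / (γ₁ + φ₁ + μ)) :=
        mul_pos hγ₁ (div_pos (mul_pos (mul_pos hρ hα) (div_pos (mul_pos hσ hXpos) hαμ)) hI1d)
      have t2 : 0 < γ₂ * ((1 - ρ) * α * (σ * X / (α + μ)) / (γ₂ + φ₂ + μ)) :=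
        mul_pos hγ₂ (div_pos (mul_pos (mul_pos h1ρ hα) (div_pos (mul_pos hσ hXpos) hαμ)) hI2d)
      have t3 : 0 < γ₃ * (ε * X / (γ₃ + μ)) := mul_pos hγ₃ (div_pos (mul_pos hε hXpos) hAd)
      positivity
    · rw [hEquil]
      have hsum : σ * X / (α + μ) + (1 - ρ) * α * (σ * X / (α + μ)) / (γ₂ + φ₂ + μ)
          + ω * (ε * X / (γ₃ + μ)) = μ * RC * (σ + ε + μ) / (β * Λ) * X := by
        rw [← hc2, hcdef]; field_simp
      refine ⟨?_, ?_, ?_, ?_, ?_, ?_, ?_⟩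
      · rw [hsum, hX]; field_simp; ring
      · rw [hsum, hX]; field_simp; ring
      · field_simp; ring
      · field_simp; ring
      · field_simp; ring
      · field_simp; ring
      · field_simp; ring
  · intro S E₁ E₂ I₁ I₂ A R hS hE₁ hE₂ hI₁ hI₂ hA hR hEq
    rw [hEquil] at hEq
    obtain ⟨h1, h2, h3, h4, h5, h6, h7⟩ := hEq
    have hE₂v : E₂ = σ * E₁ / (α + μ) := by rw [eq_div_iff (ne_of_gt hαμ)]; linear_combination h3
    have hI₂v : I₂ = (1 - ρ) * α * E₂ / (γ₂ + φ₂ + μ) := by rw [eq_div_iff (ne_of_gt hI2d)]; linear_combination h5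
    have hAv : A = ε * E₁ / (γ₃ + μ) := by rw [eq_div_iff (ne_of_gt hAd)]; linear_combination h6
    have hsum : E₂ + I₂ + ω * A = c * E₁ := by
      rw [hI₂v, hE₂v, hAv, hcdef]; field_simp
    have h2' : (β * S * c) * E₁ = (σ + ε + μ) * E₁ := by
      rw [hsum] at h2; linear_combination -h2
    have hSc : β * S * c = σ + ε + μ := mul_right_cancel₀ (ne_of_gt hE₁) h2'
    have hS2 : S = (σ + ε + μ) / (β * c) := by
      rw [eq_div_iff (ne_of_gt (mul_pos hβ hcpos))]
      linear_combination hSc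
    have hS3 : S = Λ / (μ * RC) := by
      rw [hS2, hc2]
      rw [div_eq_div_iff (by positivity) (ne_of_gt (mul_pos hμ hRCpos))]
      field_simp
    have hΛeq : Λ = (σ + ε + μ) * E₁ + μ * S := by linarith
    rw [hS3] at hΛeq
    have hq : μ * (Λ / (μ * RC)) = Λ / RC := by
      field_simp
    rw [hq] at hΛeq
    have h' : Λ / RC * RC = Λ := div_mul_cancel₀ Λ (ne_of_gt hRCpos)
    have hpoly : Λ * RC = (σ + ε + μ) * E₁ * RC + Λ := by
      linear_combination RC * hΛeq + h'
    rw [hX, eq_div_iff (ne_of_gt (mul_pos (mul_pos hβ hk) hRCpos))]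
    linear_combination (-β) * hpoly
end

section
/- At any endemic (positive) equilibrium of the SEIAR system, the susceptible component satisfies S* = S₀ / R_c, where S₀ = Λ/μ and R_c = (βS₀/(σ+ε+μ))·(σ/(α+μ) + σ(1-ρ)α/((α+μ)(γ₂+φ₂+μ)) + εω/(γ₃+μ)). -/
theorem endemic_S_eq_S0_div_Rc
    (Λ μ β σ ε α ω ρ γ₁ γ₂ γ₃ φ₁ φ₂ : ℝ)
    (hΛ : 0 < Λ) (hμ : 0 < μ) (hβ : 0 < β) (hσ : 0 < σ) (hε : 0 < ε)
    (hα : 0 < α) (hω : 0 < ω) (hρ : 0 < ρ) (hρ1 : ρ < 1)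
    (hγ₁ : 0 < γ₁) (hγ₂ : 0 < γ₂) (hγ₃ : 0 < γ₃) (hφ₁ : 0 < φ₁) (hφ₂ : 0 < φ₂)
    (S₀ Rc : ℝ) (hS₀ : S₀ = Λ / μ)
    (hRc : Rc = β * S₀ / (σ + ε + μ) *
      (σ / (α + μ) + σ * (1 - ρ) * α / ((α + μ) * (γ₂ + φ₂ + μ)) + ε * ω / (γ₃ + μ)))
    (S E₁ E₂ I₁ I₂ A R : ℝ)
    (hS : 0 < S) (hE₁ : 0 < E₁) (hE₂ : 0 < E₂) (hI₁ : 0 < I₁) (hI₂ : 0 < I₂)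
    (hA : 0 < A) (hR : 0 < R)
    (e1 : 0 = Λ - β * S * (E₂ + I₂ + ω * A) - μ * S)
    (e2 : 0 = β * S * (E₂ + I₂ + ω * A) - (σ + ε + μ) * E₁)
    (e3 : 0 = σ * E₁ - (α + μ) * E₂)
    (e4 : 0 = ρ * α * E₂ - (γ₁ + φ₁ + μ) * I₁)
    (e5 : 0 = (1 - ρ) * α * E₂ - (γ₂ + φ₂ + μ) * I₂)
    (e6 : 0 = ε * E₁ - (γ₃ + μ) * A)
    (e7 : 0 = γ₁ * I₁ + γ₂ * I₂ + γ₃ * A - μ * R) :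
    S = S₀ / Rc := by
  have hd1 : (0:ℝ) < σ + ε + μ := by linarith
  have hd2 : (0:ℝ) < α + μ := by linarith
  have hd3 : (0:ℝ) < γ₂ + φ₂ + μ := by linarith
  have hd4 : (0:ℝ) < γ₃ + μ := by linarith
  have keyc : β * S * (σ * (γ₂ + φ₂ + μ) * (γ₃ + μ) + σ * (1 - ρ) * α * (γ₃ + μ)
      + ε * ω * (α + μ) * (γ₂ + φ₂ + μ))
      = (σ + ε + μ) * ((α + μ) * (γ₂ + φ₂ + μ) * (γ₃ + μ)) := by
    apply mul_left_cancel₀ (ne_of_gt hE₁)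
    linear_combination (-((α + μ) * (γ₂ + φ₂ + μ) * (γ₃ + μ))) * e2
      + (-(β * S * (γ₂ + φ₂ + μ) * (γ₃ + μ)) - β * S * (1 - ρ) * α * (γ₃ + μ)) * e3
      + (-(β * S * (α + μ) * (γ₃ + μ))) * e5
      + (-(β * S * ω * (α + μ) * (γ₂ + φ₂ + μ))) * e6
  have hS₀pos : 0 < S₀ := hS₀ ▸ div_pos hΛ hμ
  have hK : 0 < σ / (α + μ) + σ * (1 - ρ) * α / ((α + μ) * (γ₂ + φ₂ + μ)) + ε * ω / (γ₃ + μ) := by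
    have h1 : 0 < σ / (α + μ) := div_pos hσ hd2
    have h2 : 0 < σ * (1 - ρ) * α / ((α + μ) * (γ₂ + φ₂ + μ)) :=
      div_pos (mul_pos (mul_pos hσ (by linarith)) hα) (mul_pos hd2 hd3)
    have h3 : 0 < ε * ω / (γ₃ + μ) := div_pos (mul_pos hε hω) hd4
    linarith
  have hRcpos : 0 < Rc := by
    rw [hRc]; exact mul_pos (div_pos (mul_pos hβ hS₀pos) hd1) hK
  have hRc' : Rc * ((σ + ε + μ) * ((α + μ) * (γ₂ + φ₂ + μ) * (γ₃ + μ)))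
      = β * S₀ * (σ * (γ₂ + φ₂ + μ) * (γ₃ + μ) + σ * (1 - ρ) * α * (γ₃ + μ)
        + ε * ω * (α + μ) * (γ₂ + φ₂ + μ)) := by
    rw [hRc]
    field_simp
  have hD : (0:ℝ) < (σ + ε + μ) * ((α + μ) * (γ₂ + φ₂ + μ) * (γ₃ + μ)) :=
    mul_pos hd1 (mul_pos (mul_pos hd2 hd3) hd4)
  have hmain : S * Rc = S₀ := by
    apply mul_right_cancel₀ (b := (σ + ε + μ) * ((α + μ) * (γ₂ + φ₂ + μ) * (γ₃ + μ)))
      (ne_of_gt hD)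
    linear_combination S * hRc' + S₀ * keyc
  rw [eq_div_iff (ne_of_gt hRcpos)]
  exact hmain
end

section
/- Let all parameters be positive, ρ ∈ (0,1), S₀ = Λ/μ, and define F(λ) = (βS₀/(σ+ε+μ))·[σ/(λ+α+μ) + σ(1-ρ)α/((λ+α+μ)(λ+γ₂+φ₂+μ)) + εω/(λ+γ₃+μ)] for complex λ with Re(λ) ≥ 0. Then |F(λ)| ≤ R_c, where R_c = F(0). -/
lemma abs_shift_ge (z : ℂ) (hz : 0 ≤ z.re) (a : ℝ) (ha : 0 < a) :
    a ≤ ‖z + (a : ℂ)‖ := by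
  calc a ≤ (z + (a : ℂ)).re := by simp; linarith
  _ ≤ ‖z + (a : ℂ)‖ := Complex.re_le_norm _

lemma abs_rdiv_le (c a : ℝ) (hc : 0 ≤ c) (ha : 0 < a) (w : ℂ)
    (hw : a ≤ ‖w‖) : ‖(c : ℂ) / w‖ ≤ c / a := by
  rw [norm_div, Complex.norm_real, Real.norm_eq_abs, abs_of_nonneg hc]
  exact div_le_div_of_nonneg_left hc ha hw

theorem F_bound_by_Rc
    (Λ μ β σ ε α ω ρ γ₂ γ₃ φ₂ : ℝ)
    (hΛ : 0 < Λ) (hμ : 0 < μ) (hβ : 0 < β) (hσ : 0 < σ) (hε : 0 < ε)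
    (hα : 0 < α) (hω : 0 < ω) (hρ : 0 < ρ) (hρ1 : ρ < 1)
    (hγ₂ : 0 < γ₂) (hγ₃ : 0 < γ₃) (hφ₂ : 0 < φ₂)
    (S₀ : ℝ) (hS₀ : S₀ = Λ / μ)
    (F : ℂ → ℂ)
    (hF : ∀ z : ℂ, 0 ≤ z.re → F z = (β * S₀ / (σ + ε + μ) : ℝ) *
      ((σ : ℂ) / (z + (α : ℂ) + (μ : ℂ)) +
       (σ * (1 - ρ) * α : ℝ) / ((z + (α : ℂ) + (μ : ℂ)) * (z + (γ₂ : ℂ) + (φ₂ : ℂ) + (μ : ℂ))) +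
       (ε * ω : ℝ) / (z + (γ₃ : ℂ) + (μ : ℂ))))
    (Rc : ℝ) (hRc : (Rc : ℂ) = F 0) :
    ∀ z : ℂ, 0 ≤ z.re → ‖F z‖ ≤ Rc := by
  have hS : 0 < S₀ := by rw [hS₀]; positivity
  set c := β * S₀ / (σ + ε + μ) with hcdef
  have hc : 0 ≤ c := by positivity
  have haμ : 0 < α + μ := by linarith
  have hbμ : 0 < γ₂ + φ₂ + μ := by linarith
  have hgμ : 0 < γ₃ + μ := by linarith
  have hσ' : (0:ℝ) ≤ σ := hσ.le
  have hρ' : (0:ℝ) < 1 - ρ := by linarith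
  have ht2 : (0:ℝ) ≤ σ * (1 - ρ) * α := by positivity
  have ht3 : (0:ℝ) ≤ ε * ω := by positivity
  have hRcval : Rc = c * (σ / (α + μ) + σ * (1 - ρ) * α / ((α + μ) * (γ₂ + φ₂ + μ))
      + ε * ω / (γ₃ + μ)) := by
    have h0 := hF 0 (by simp)
    rw [h0] at hRc
    have : (Rc : ℂ) = ((c * (σ / (α + μ) + σ * (1 - ρ) * α / ((α + μ) * (γ₂ + φ₂ + μ))
        + ε * ω / (γ₃ + μ)) : ℝ) : ℂ) := by
      rw [hRc]; push_cast; ring_nf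
    exact_mod_cast this
  intro z hz
  rw [hF z hz, hRcval]
  rw [norm_mul, Complex.norm_real, Real.norm_eq_abs, abs_of_nonneg hc]
  apply mul_le_mul_of_nonneg_left _ hc
  have e1 : z + (α : ℂ) + (μ : ℂ) = z + ((α + μ : ℝ) : ℂ) := by push_cast; ring
  have e2 : z + (γ₂ : ℂ) + (φ₂ : ℂ) + (μ : ℂ) = z + ((γ₂ + φ₂ + μ : ℝ) : ℂ) := by
    push_cast; ring
  have e3 : z + (γ₃ : ℂ) + (μ : ℂ) = z + ((γ₃ + μ : ℝ) : ℂ) := by push_cast; ring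
  have h1 := abs_shift_ge z hz (α + μ) haμ
  have h2 := abs_shift_ge z hz (γ₂ + φ₂ + μ) hbμ
  have h3 := abs_shift_ge z hz (γ₃ + μ) hgμ
  calc ‖(σ : ℂ) / (z + (α : ℂ) + (μ : ℂ)) +
       (σ * (1 - ρ) * α : ℝ) / ((z + (α : ℂ) + (μ : ℂ)) * (z + (γ₂ : ℂ) + (φ₂ : ℂ) + (μ : ℂ))) +
       (ε * ω : ℝ) / (z + (γ₃ : ℂ) + (μ : ℂ))‖
      ≤ ‖(σ : ℂ) / (z + (α : ℂ) + (μ : ℂ))‖ +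
        ‖(σ * (1 - ρ) * α : ℝ) / ((z + (α : ℂ) + (μ : ℂ)) * (z + (γ₂ : ℂ) + (φ₂ : ℂ) + (μ : ℂ)))‖ +
        ‖(ε * ω : ℝ) / (z + (γ₃ : ℂ) + (μ : ℂ))‖ := by
        exact (norm_add_le _ _).trans (by gcongr; exact norm_add_le _ _)
    _ ≤ σ / (α + μ) + σ * (1 - ρ) * α / ((α + μ) * (γ₂ + φ₂ + μ)) + ε * ω / (γ₃ + μ) := by
        gcongr
        · rw [e1]; exact abs_rdiv_le σ (α + μ) hσ' haμ _ h1
        · rw [e1, e2]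
          refine abs_rdiv_le _ _ ht2 (by positivity) _ ?_
          rw [norm_mul]
          exact mul_le_mul h1 h2 hbμ.le (norm_nonneg _)
        · rw [e3]; exact abs_rdiv_le _ _ ht3 hgμ _ h3
end

section
/- Suppose R_c < 1 and all parameters are positive with ρ ∈ (0,1). Then for every complex λ with Re(λ) ≥ 0, we have λ + (σ+ε+μ)(1 - F(λ)) ≠ 0, where F(λ) = (βS₀/(σ+ε+μ))·[σ/(λ+α+μ) + σ(1-ρ)α/((λ+α+μ)(λ+γ₂+φ₂+μ)) + εω/(λ+γ₃+μ)]. -/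
lemma aux_le_abs (z : ℂ) (hz : 0 ≤ z.re) (a : ℝ) (ha : 0 < a) :
    a ≤ norm (z + a) := by
  calc a ≤ (z + (a:ℂ)).re := by simp [Complex.add_re]; linarith
    _ ≤ norm (z + a) := Complex.re_le_norm _

theorem no_nonneg_real_part_root
    (Λ μ β σ ε α ω ρ γ₂ γ₃ φ₂ : ℝ)
    (hΛ : 0 < Λ) (hμ : 0 < μ) (hβ : 0 < β) (hσ : 0 < σ) (hε : 0 < ε)
    (hα : 0 < α) (hω : 0 < ω) (hρ : 0 < ρ) (hρ1 : ρ < 1)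
    (hγ₂ : 0 < γ₂) (hγ₃ : 0 < γ₃) (hφ₂ : 0 < φ₂)
    (S₀ : ℝ) (hS₀ : S₀ = Λ / μ)
    (F : ℂ → ℂ)
    (hF : ∀ z : ℂ, 0 ≤ z.re → F z = (β * S₀ / (σ + ε + μ) : ℝ) *
      ((σ : ℂ) / (z + (α : ℂ) + (μ : ℂ)) +
       (σ * (1 - ρ) * α : ℝ) / ((z + (α : ℂ) + (μ : ℂ)) * (z + (γ₂ : ℂ) + (φ₂ : ℂ) + (μ : ℂ))) +
       (ε * ω : ℝ) / (z + (γ₃ : ℂ) + (μ : ℂ))))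
    (Rc : ℝ) (hRc : (Rc : ℂ) = F 0) (hRclt : Rc < 1) :
    ∀ z : ℂ, 0 ≤ z.re → z + ((σ + ε + μ : ℝ) : ℂ) * (1 - F z) ≠ 0 := by
  intro z hz heq
  have hρ' : 0 < 1 - ρ := by linarith
  have hS₀pos : 0 < S₀ := by rw [hS₀]; positivity
  have hc : 0 < σ + ε + μ := by positivity
  set K := β * S₀ / (σ + ε + μ) with hK_def
  have hK : 0 < K := by positivity
  set a := α + μ with ha_def
  set d := γ₂ + φ₂ + μ with hd_def
  set g := γ₃ + μ with hg_def
  have ha : 0 < a := by positivity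
  have hd : 0 < d := by positivity
  have hg : 0 < g := by positivity
  have hb : 0 < σ * (1 - ρ) * α := by positivity
  -- value of Rc
  have hRcval : Rc = K * (σ / a + σ * (1 - ρ) * α / (a * d) + ε * ω / g) := by
    have h0 := hF 0 (by norm_num)
    rw [h0] at hRc
    have : (Rc : ℂ) = ((K * (σ / a + σ * (1 - ρ) * α / (a * d) + ε * ω / g) : ℝ) : ℂ) := by
      rw [hRc]; push_cast [ha_def, hd_def, hg_def, hK_def]; ring
    exact_mod_cast this
  -- rewrite denominators
  have hz1 : z + (α:ℂ) + (μ:ℂ) = z + (a:ℝ) := by push_cast [ha_def]; ring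
  have hz2 : z + (γ₂:ℂ) + (φ₂:ℂ) + (μ:ℂ) = z + (d:ℝ) := by push_cast [hd_def]; ring
  have hz3 : z + (γ₃:ℂ) + (μ:ℂ) = z + (g:ℝ) := by push_cast [hg_def]; ring
  have la := aux_le_abs z hz a ha
  have ld := aux_le_abs z hz d hd
  have lg := aux_le_abs z hz g hg
  -- bound |F z| ≤ Rc
  have hbound : norm (F z) ≤ Rc := by
    rw [hF z hz, hz1, hz2, hz3, hRcval, norm_mul, Complex.norm_real, Real.norm_eq_abs, abs_of_pos hK]
    refine mul_le_mul_of_nonneg_left ?_ (le_of_lt hK)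
    have e1 : norm ((σ:ℂ) / (z + (a:ℝ))) ≤ σ / a := by
      rw [norm_div, Complex.norm_real, Real.norm_eq_abs, abs_of_pos hσ]
      gcongr
    have e2 : norm (((σ * (1 - ρ) * α : ℝ):ℂ) / ((z + (a:ℝ)) * (z + (d:ℝ)))) ≤
        σ * (1 - ρ) * α / (a * d) := by
      rw [norm_div, norm_mul, Complex.norm_real, Real.norm_eq_abs, abs_of_pos hb]
      have : a * d ≤ norm (z + (a:ℝ)) * norm (z + (d:ℝ)) :=
        mul_le_mul la ld (le_of_lt hd) (le_of_lt (lt_of_lt_of_le ha la))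
      exact div_le_div_of_nonneg_left (le_of_lt hb) (by positivity) this
    have e3 : norm (((ε * ω : ℝ):ℂ) / (z + (g:ℝ))) ≤ ε * ω / g := by
      rw [norm_div, Complex.norm_real, Real.norm_eq_abs, abs_of_pos (by positivity : (0:ℝ) < ε * ω)]
      gcongr
    calc norm ((σ:ℂ) / (z + (a:ℝ)) +
          ((σ * (1 - ρ) * α : ℝ):ℂ) / ((z + (a:ℝ)) * (z + (d:ℝ))) +
          ((ε * ω : ℝ):ℂ) / (z + (g:ℝ)))
        ≤ norm ((σ:ℂ) / (z + (a:ℝ))) +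
          norm (((σ * (1 - ρ) * α : ℝ):ℂ) / ((z + (a:ℝ)) * (z + (d:ℝ)))) +
          norm (((ε * ω : ℝ):ℂ) / (z + (g:ℝ))) := by
            apply le_trans (norm_add_le _ _)
            gcongr
            exact norm_add_le _ _
      _ ≤ σ / a + σ * (1 - ρ) * α / (a * d) + ε * ω / g := by gcongr
  -- derive contradiction
  have key : ((σ + ε + μ : ℝ) : ℂ) * F z = z + ((σ + ε + μ : ℝ) : ℂ) := by
    linear_combination -heq
  have h1 : (σ + ε + μ) * norm (F z) = norm (z + ((σ + ε + μ : ℝ):ℂ)) := by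
    rw [← key, norm_mul, Complex.norm_real, Real.norm_eq_abs, abs_of_pos hc]
  have h2 : (σ + ε + μ) ≤ norm (z + ((σ + ε + μ : ℝ):ℂ)) :=
    aux_le_abs z hz _ hc
  nlinarith [norm_nonneg (F z)]
end

section
/- Let V(t) be the Lyapunov function V = S₀·h(S/S₀) + R_c·E₁ + (βS₀/(α+μ))E₂ + (ωβS₀/(γ₃+μ))A + (βS₀/(γ₂+φ₂+μ))[(1-ρ)E₂ + I₂] - (βS₀(1-ρ)μ/((α+μ)(γ₂+φ₂+μ)))E₂, where h(x) = x - 1 - ln x. Along solutions of the SEIAR system with S(t) > 0, the derivative satisfies dV/dt = -(μ/S)(S - S₀)² + (R_c - 1)·βS·(E₂ + I₂ + ωA). -/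
set_option maxHeartbeats 1000000


theorem lyapunov_derivative
    (Λ μ β σ ε α ω ρ γ₂ γ₃ φ₂ : ℝ)
    (hΛ : 0 < Λ) (hμ : 0 < μ) (hβ : 0 < β) (hσ : 0 < σ) (hε : 0 < ε)
    (hα : 0 < α) (hω : 0 < ω) (hρ : 0 < ρ) (hρ1 : ρ < 1)
    (hγ₂ : 0 < γ₂) (hγ₃ : 0 < γ₃) (hφ₂ : 0 < φ₂)
    (S₀ : ℝ) (hS₀ : S₀ = Λ / μ)
    (Rc : ℝ) (hRc : Rc = β * S₀ / (σ + ε + μ) *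
      (σ / (α + μ) + σ * (1 - ρ) * α / ((α + μ) * (γ₂ + φ₂ + μ)) + ε * ω / (γ₃ + μ)))
    (S E₁ E₂ I₂ A : ℝ → ℝ) (t : ℝ) (hSpos : S t > 0)
    (hS' : HasDerivAt S (Λ - β * S t * (E₂ t + I₂ t + ω * A t) - μ * S t) t)
    (hE₁' : HasDerivAt E₁ (β * S t * (E₂ t + I₂ t + ω * A t) - (σ + ε + μ) * E₁ t) t)
    (hE₂' : HasDerivAt E₂ (σ * E₁ t - (α + μ) * E₂ t) t)
    (hI₂' : HasDerivAt I₂ ((1 - ρ) * α * E₂ t - (γ₂ + φ₂ + μ) * I₂ t) t)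
    (hA' : HasDerivAt A (ε * E₁ t - (γ₃ + μ) * A t) t)
    (V : ℝ → ℝ)
    (hV : ∀ s : ℝ, V s = S₀ * (S s / S₀ - 1 - Real.log (S s / S₀)) + Rc * E₁ s
        + β * S₀ / (α + μ) * E₂ s + ω * β * S₀ / (γ₃ + μ) * A s
        + β * S₀ / (γ₂ + φ₂ + μ) * ((1 - ρ) * E₂ s + I₂ s)
        - β * S₀ * (1 - ρ) * μ / ((α + μ) * (γ₂ + φ₂ + μ)) * E₂ s) :
    HasDerivAt V (-(μ / S t) * (S t - S₀)^2
        + (Rc - 1) * β * S t * (E₂ t + I₂ t + ω * A t)) t := by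
  have hS₀pos : 0 < S₀ := by rw [hS₀]; positivity
  have hSne : S t ≠ 0 := ne_of_gt hSpos
  have hS₀ne : S₀ ≠ 0 := ne_of_gt hS₀pos
  have hΛeq : Λ = μ * S₀ := by rw [hS₀]; field_simp
  set dS := Λ - β * S t * (E₂ t + I₂ t + ω * A t) - μ * S t with hdS
  set dE₁ := β * S t * (E₂ t + I₂ t + ω * A t) - (σ + ε + μ) * E₁ t with hdE₁
  set dE₂ := σ * E₁ t - (α + μ) * E₂ t with hdE₂
  set dI₂ := (1 - ρ) * α * E₂ t - (γ₂ + φ₂ + μ) * I₂ t with hdI₂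
  set dA := ε * E₁ t - (γ₃ + μ) * A t with hdA
  have hVfun : V = fun s => S₀ * (S s / S₀ - 1 - Real.log (S s / S₀)) + Rc * E₁ s
        + β * S₀ / (α + μ) * E₂ s + ω * β * S₀ / (γ₃ + μ) * A s
        + β * S₀ / (γ₂ + φ₂ + μ) * ((1 - ρ) * E₂ s + I₂ s)
        - β * S₀ * (1 - ρ) * μ / ((α + μ) * (γ₂ + φ₂ + μ)) * E₂ s := funext hV
  have hdiv : HasDerivAt (fun s => S s / S₀) (dS / S₀) t := hS'.div_const S₀
  have hlog : HasDerivAt (fun s => Real.log (S s / S₀)) (dS / S₀ / (S t / S₀)) t :=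
    hdiv.log (by positivity)
  have hlog' : HasDerivAt (fun s => Real.log (S s / S₀)) (dS / S t) t := by
    convert hlog using 1
    field_simp
  have hbig : HasDerivAt V
      (S₀ * (dS / S₀ - dS / S t) + Rc * dE₁
        + β * S₀ / (α + μ) * dE₂ + ω * β * S₀ / (γ₃ + μ) * dA
        + β * S₀ / (γ₂ + φ₂ + μ) * ((1 - ρ) * dE₂ + dI₂)
        - β * S₀ * (1 - ρ) * μ / ((α + μ) * (γ₂ + φ₂ + μ)) * dE₂) t := by
    rw [hVfun]
    exact (((((((hdiv.sub_const 1).sub hlog').const_mul S₀).add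
      (hE₁'.const_mul Rc)).add (hE₂'.const_mul _)).add (hA'.const_mul _)).add
      (((hE₂'.const_mul ((1:ℝ) - ρ)).add hI₂').const_mul _)).sub (hE₂'.const_mul _)
  have h1 : (α + μ) ≠ 0 := by positivity
  have h2 : (γ₂ + φ₂ + μ) ≠ 0 := by positivity
  have h3 : (γ₃ + μ) ≠ 0 := by positivity
  have h4 : (σ + ε + μ) ≠ 0 := by positivity
  have t1 : S₀ * (dS / S₀ - dS / S t)
      = -(μ / S t) * (S t - S₀)^2 - β * S t * (E₂ t + I₂ t + ω * A t)
        + β * S₀ * (E₂ t + I₂ t + ω * A t) := by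
    rw [hdS, hΛeq]
    field_simp
    ring
  have hkey : Rc * (σ + ε + μ)
      = β * S₀ * σ / (α + μ) + ω * β * S₀ * ε / (γ₃ + μ)
        + β * S₀ * (1 - ρ) * σ / (γ₂ + φ₂ + μ)
        - β * S₀ * (1 - ρ) * μ * σ / ((α + μ) * (γ₂ + φ₂ + μ)) := by
    rw [hRc]
    field_simp
    ring
  have c2 : β * S₀ / (α + μ) * dE₂
      = β * S₀ * σ / (α + μ) * E₁ t - β * S₀ * E₂ t := by
    rw [hdE₂]; field_simp
  have c3 : ω * β * S₀ / (γ₃ + μ) * dA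
      = ω * β * S₀ * ε / (γ₃ + μ) * E₁ t - ω * β * S₀ * A t := by
    rw [hdA]; field_simp
  have c4 : β * S₀ / (γ₂ + φ₂ + μ) * ((1 - ρ) * dE₂ + dI₂)
      = β * S₀ * (1 - ρ) * σ / (γ₂ + φ₂ + μ) * E₁ t
        - β * S₀ * (1 - ρ) * μ / (γ₂ + φ₂ + μ) * E₂ t - β * S₀ * I₂ t := by
    rw [hdE₂, hdI₂]; field_simp; ring
  have c5 : β * S₀ * (1 - ρ) * μ / ((α + μ) * (γ₂ + φ₂ + μ)) * dE₂
      = β * S₀ * (1 - ρ) * μ * σ / ((α + μ) * (γ₂ + φ₂ + μ)) * E₁ t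
        - β * S₀ * (1 - ρ) * μ / (γ₂ + φ₂ + μ) * E₂ t := by
    rw [hdE₂]; field_simp
  have t2 : Rc * dE₁ + β * S₀ / (α + μ) * dE₂ + ω * β * S₀ / (γ₃ + μ) * dA
        + β * S₀ / (γ₂ + φ₂ + μ) * ((1 - ρ) * dE₂ + dI₂)
        - β * S₀ * (1 - ρ) * μ / ((α + μ) * (γ₂ + φ₂ + μ)) * dE₂
      = Rc * (β * S t * (E₂ t + I₂ t + ω * A t))
        - β * S₀ * (E₂ t + I₂ t + ω * A t) := by
    rw [hdE₁]
    linear_combination c2 + c3 + c4 - c5 - E₁ t * hkey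
  convert hbig using 1
  linear_combination -t1 - t2
end

section
/- Suppose R_c > 1, all parameters positive, ρ ∈ (0,1), and let (S*, E₁*, ...) be the endemic equilibrium with S* = S₀/R_c and E₁* > 0. Then for every complex λ₂ with Re(λ₂) ≥ 0, the equation 1 + (R_c E₁*(σ+ε+μ)/S₀)·(1/(λ₂+μ)) = (S*(σ+ε+μ)/(S₀(λ₂+σ+ε+μ)))·F(λ₂) has no solution; i.e., the left side has modulus > 1 while the right side has modulus ≤ 1. -/
private lemma le_abs_add' {z : ℂ} (hz : 0 ≤ z.re) {a : ℝ} (ha : 0 < a) :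
    a ≤ ‖z + (a : ℂ)‖ := by
  have h : a ≤ (z + (a:ℂ)).re := by simp [Complex.add_re, hz]
  exact h.trans (Complex.re_le_norm _)

private lemma abs_div_le_of_re' {z : ℂ} (hz : 0 ≤ z.re) {a b : ℝ} (ha : 0 < a) (hb : 0 ≤ b) :
    ‖(b:ℂ) / (z + (a:ℂ))‖ ≤ b / a := by
  rw [norm_div, Complex.norm_real, Real.norm_eq_abs, abs_of_nonneg hb]
  gcongr
  all_goals first
    | exact le_abs_add' hz ha
    | positivity

private lemma abs_div_le_of_re2' {z : ℂ} (hz : 0 ≤ z.re) {a a' b : ℝ} (ha : 0 < a)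
    (ha' : 0 < a') (hb : 0 ≤ b) :
    ‖(b:ℂ) / ((z + (a:ℂ)) * (z + (a':ℂ)))‖ ≤ b / (a * a') := by
  rw [norm_div, norm_mul, Complex.norm_real, Real.norm_eq_abs, abs_of_nonneg hb]
  gcongr
  all_goals first
    | exact le_abs_add' hz ha
    | exact le_abs_add' hz ha'
    | positivity

theorem endemic_eigen_equation_no_solution
    (Λ μ β σ ε α ω ρ γ₂ γ₃ φ₂ : ℝ)
    (hΛ : 0 < Λ) (hμ : 0 < μ) (hβ : 0 < β) (hσ : 0 < σ) (hε : 0 < ε)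
    (hα : 0 < α) (hω : 0 < ω) (hρ : 0 < ρ) (hρ1 : ρ < 1)
    (hγ₂ : 0 < γ₂) (hγ₃ : 0 < γ₃) (hφ₂ : 0 < φ₂)
    (S₀ : ℝ) (hS₀ : S₀ = Λ / μ)
    (F : ℂ → ℂ)
    (hF : ∀ z : ℂ, 0 ≤ z.re → F z = (β * S₀ / (σ + ε + μ) : ℝ) *
      ((σ : ℂ) / (z + (α : ℂ) + (μ : ℂ)) +
       (σ * (1 - ρ) * α : ℝ) / ((z + (α : ℂ) + (μ : ℂ)) * (z + (γ₂ : ℂ) + (φ₂ : ℂ) + (μ : ℂ))) +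
       (ε * ω : ℝ) / (z + (γ₃ : ℂ) + (μ : ℂ))))
    (Rc : ℝ) (hRcF : (Rc : ℂ) = F 0) (hRc1 : 1 < Rc)
    (Sstar E₁star : ℝ) (hSstar : Sstar = S₀ / Rc) (hE₁star : 0 < E₁star) :
    ∀ z : ℂ, 0 ≤ z.re →
      1 < ‖1 + ((Rc * E₁star * (σ + ε + μ) / S₀ : ℝ) : ℂ) * (1 / (z + (μ : ℂ)))‖ ∧
      ‖((Sstar * (σ + ε + μ) : ℝ) : ℂ) / (((S₀ : ℝ) : ℂ) * (z + ((σ + ε + μ : ℝ) : ℂ))) * F z‖ ≤ 1 ∧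
      1 + ((Rc * E₁star * (σ + ε + μ) / S₀ : ℝ) : ℂ) * (1 / (z + (μ : ℂ))) ≠
        ((Sstar * (σ + ε + μ) : ℝ) : ℂ) / (((S₀ : ℝ) : ℂ) * (z + ((σ + ε + μ : ℝ) : ℂ))) * F z := by
  intro z hz
  have hs : (0:ℝ) < σ + ε + μ := by positivity
  have hS0 : 0 < S₀ := by rw [hS₀]; positivity
  have hRc0 : (0:ℝ) < Rc := lt_trans one_pos hRc1
  have hSst : 0 < Sstar := by rw [hSstar]; positivity
  -- Part 1
  have hzμ : (μ:ℝ) ≤ ‖z + (μ:ℂ)‖ := le_abs_add' hz hμ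
  have hzμ0 : z + (μ:ℂ) ≠ 0 := by
    intro h
    rw [h, norm_zero] at hzμ; linarith
  have hcpos : 0 < Rc * E₁star * (σ + ε + μ) / S₀ := by positivity
  have hre : 0 < ((z + (μ:ℂ))⁻¹).re := by
    rw [Complex.inv_re]
    apply div_pos
    · simp only [Complex.add_re, Complex.ofReal_re]; linarith
    · exact Complex.normSq_pos.mpr hzμ0
  have part1 : 1 < ‖1 + ((Rc * E₁star * (σ + ε + μ) / S₀ : ℝ) : ℂ) * (1 / (z + (μ:ℂ)))‖ := by
    have h1 : (1:ℝ) < (1 + ((Rc * E₁star * (σ + ε + μ) / S₀ : ℝ) : ℂ) * (1 / (z + (μ:ℂ)))).re := by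
      simp only [Complex.add_re, Complex.one_re, one_div, Complex.re_ofReal_mul]
      nlinarith
    exact h1.trans_le (Complex.re_le_norm _)
  -- Rc formula
  have hαμ : (0:ℝ) < α + μ := by positivity
  have hγφμ : (0:ℝ) < γ₂ + φ₂ + μ := by positivity
  have hγ₃μ : (0:ℝ) < γ₃ + μ := by positivity
  have e1 : z + (α:ℂ) + (μ:ℂ) = z + ((α+μ:ℝ):ℂ) := by push_cast; ring
  have e2 : z + (γ₂:ℂ) + (φ₂:ℂ) + (μ:ℂ) = z + ((γ₂+φ₂+μ:ℝ):ℂ) := by push_cast; ring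
  have e3 : z + (γ₃:ℂ) + (μ:ℂ) = z + ((γ₃+μ:ℝ):ℂ) := by push_cast; ring
  have hFz := hF z hz
  rw [e1, e2, e3] at hFz
  have h0 := hF 0 (by norm_num)
  rw [h0] at hRcF
  have hRc : Rc = (β * S₀ / (σ+ε+μ)) *
      (σ/(α+μ) + σ*(1-ρ)*α/((α+μ)*(γ₂+φ₂+μ)) + ε*ω/(γ₃+μ)) := by
    have hne1 : (α+μ:ℂ) ≠ 0 := by exact_mod_cast hαμ.ne'
    have hne2 : (γ₂+φ₂+μ:ℂ) ≠ 0 := by exact_mod_cast hγφμ.ne'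
    have hne3 : (γ₃+μ:ℂ) ≠ 0 := by exact_mod_cast hγ₃μ.ne'
    have : ((Rc:ℝ):ℂ) = (((β * S₀ / (σ+ε+μ)) *
        (σ/(α+μ) + σ*(1-ρ)*α/((α+μ)*(γ₂+φ₂+μ)) + ε*ω/(γ₃+μ)) : ℝ) : ℂ) := by
      rw [hRcF]; push_cast
      rw [zero_add]
      ring
    exact_mod_cast this
  -- bound on |F z|
  have hcβ : 0 ≤ β * S₀ / (σ+ε+μ) := by positivity
  have h1b := abs_div_le_of_re' hz hαμ hσ.le
  have hnn : (0:ℝ) ≤ σ*(1-ρ)*α := mul_nonneg (mul_nonneg hσ.le (sub_nonneg.mpr hρ1.le)) hα.le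
  have h2b := abs_div_le_of_re2' hz hαμ hγφμ hnn
  have h3b := abs_div_le_of_re' hz hγ₃μ (by positivity : (0:ℝ) ≤ ε*ω)
  have habsF : ‖F z‖ ≤ Rc := by
    rw [hFz, hRc, norm_mul, Complex.norm_real, Real.norm_eq_abs, abs_of_nonneg hcβ]
    apply mul_le_mul_of_nonneg_left _ hcβ
    calc ‖(σ:ℂ)/(z+((α+μ:ℝ):ℂ)) +
          ((σ*(1-ρ)*α:ℝ):ℂ)/((z+((α+μ:ℝ):ℂ))*(z+((γ₂+φ₂+μ:ℝ):ℂ))) +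
          ((ε*ω:ℝ):ℂ)/(z+((γ₃+μ:ℝ):ℂ))‖
        ≤ ‖(σ:ℂ)/(z+((α+μ:ℝ):ℂ)) +
          ((σ*(1-ρ)*α:ℝ):ℂ)/((z+((α+μ:ℝ):ℂ))*(z+((γ₂+φ₂+μ:ℝ):ℂ)))‖ +
          ‖((ε*ω:ℝ):ℂ)/(z+((γ₃+μ:ℝ):ℂ))‖ := norm_add_le _ _
      _ ≤ ‖(σ:ℂ)/(z+((α+μ:ℝ):ℂ))‖ +
          ‖((σ*(1-ρ)*α:ℝ):ℂ)/((z+((α+μ:ℝ):ℂ))*(z+((γ₂+φ₂+μ:ℝ):ℂ)))‖ +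
          ‖((ε*ω:ℝ):ℂ)/(z+((γ₃+μ:ℝ):ℂ))‖ := by
            gcongr
            exact norm_add_le _ _
      _ ≤ σ/(α+μ) + σ*(1-ρ)*α/((α+μ)*(γ₂+φ₂+μ)) + ε*ω/(γ₃+μ) := by
            gcongr
  -- Part 2
  have hzs : (σ+ε+μ:ℝ) ≤ ‖z + ((σ+ε+μ:ℝ):ℂ)‖ := le_abs_add' hz hs
  have part2 : ‖((Sstar * (σ + ε + μ) : ℝ) : ℂ) /
      (((S₀ : ℝ) : ℂ) * (z + ((σ + ε + μ : ℝ) : ℂ))) * F z‖ ≤ 1 := by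
    rw [norm_mul, norm_div, norm_mul, Complex.norm_real, Real.norm_eq_abs, Complex.norm_real, Real.norm_eq_abs,
        abs_of_nonneg (by positivity : (0:ℝ) ≤ Sstar * (σ+ε+μ)), abs_of_nonneg hS0.le]
    have key : Sstar*(σ+ε+μ) / (S₀ * ‖z + ((σ+ε+μ:ℝ):ℂ)‖) * ‖F z‖
        ≤ Sstar*(σ+ε+μ) / (S₀ * (σ+ε+μ)) * Rc := by
      gcongr
      all_goals first | positivity | exact norm_nonneg _ | skip
    have heq1 : Sstar*(σ+ε+μ)/(S₀*(σ+ε+μ)) * Rc = 1 := by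
      rw [hSstar]; field_simp
    linarith
  refine ⟨part1, part2, fun heq => ?_⟩
  rw [heq] at part1
  linarith
end

section
/- The control reproduction number R_c = (βS₀/(σ+ε+μ))·(σ/(α+μ) + σ(1-ρ)α/((α+μ)(γ₂+φ₂+μ)) + εω/(γ₃+μ)) equals the spectral radius of the matrix FV⁻¹, where F and V are the 5×5 matrices F = βS₀·(row 1 = (0,1,0,1,ω), all other rows zero) and V is the lower-triangular matrix with diagonal (σ+ε+μ, α+μ, γ₁+φ₁+μ, γ₂+φ₂+μ, γ₃+μ) and subdiagonal entries V₂₁ = -σ, V₃₂ = -ρα, V₄₂ = -(1-ρ)α, V₅₁ = -ε. -/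
open Matrix

private lemma det_aux (m0 m1 m2 m3 m4 z : ℂ) :
    (!![z-m0,-m1,-m2,-m3,-m4; 0,z,0,0,0; 0,0,z,0,0; 0,0,0,z,0; 0,0,0,0,z] :
      Matrix (Fin 5) (Fin 5) ℂ).det = (z - m0) * z ^ 4 := by
  simp [Matrix.det_succ_row_zero, Fin.sum_univ_succ]
  ring_nf
  tauto

private lemma spec_aux (M : Matrix (Fin 5) (Fin 5) ℂ)
    (h : ∀ i j : Fin 5, i ≠ 0 → M i j = 0) (z : ℂ) :
    z ∈ spectrum ℂ M ↔ (z - M 0 0) * z ^ 4 = 0 := by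
  have hM : M = !![M 0 0, M 0 1, M 0 2, M 0 3, M 0 4;
      0,0,0,0,0; 0,0,0,0,0; 0,0,0,0,0; 0,0,0,0,0] := by
    ext i j
    fin_cases i <;> fin_cases j <;>
      simp_all [Matrix.vecHead, Matrix.vecTail] <;>
      first
        | exact h 1 0 (by decide) | exact h 1 1 (by decide) | exact h 1 2 (by decide)
        | exact h 1 3 (by decide) | exact h 1 4 (by decide)
        | exact h 2 0 (by decide) | exact h 2 1 (by decide) | exact h 2 2 (by decide)
        | exact h 2 3 (by decide) | exact h 2 4 (by decide)
        | exact h 3 0 (by decide) | exact h 3 1 (by decide) | exact h 3 2 (by decide)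
        | exact h 3 3 (by decide) | exact h 3 4 (by decide)
        | exact h 4 0 (by decide) | exact h 4 1 (by decide) | exact h 4 2 (by decide)
        | exact h 4 3 (by decide) | exact h 4 4 (by decide)
  have key : algebraMap ℂ (Matrix (Fin 5) (Fin 5) ℂ) z - M =
      !![z - M 0 0, -(M 0 1), -(M 0 2), -(M 0 3), -(M 0 4);
         0,z,0,0,0; 0,0,z,0,0; 0,0,0,z,0; 0,0,0,0,z] := by
    rw [hM]
    ext i j
    fin_cases i <;> fin_cases j <;>
      simp [Matrix.algebraMap_matrix_apply, Matrix.vecHead, Matrix.vecTail]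
  rw [spectrum.mem_iff, Matrix.isUnit_iff_isUnit_det, isUnit_iff_ne_zero, not_not,
    key, det_aux]

set_option maxHeartbeats 1000000 in
theorem Rc_is_spectral_radius
    (Λ μ β σ ε α ω ρ γ₁ γ₂ γ₃ φ₁ φ₂ : ℝ)
    (hΛ : 0 < Λ) (hμ : 0 < μ) (hβ : 0 < β) (hσ : 0 < σ) (hε : 0 < ε)
    (hα : 0 < α) (hω : 0 < ω) (hρ : 0 < ρ) (hρ1 : ρ < 1)
    (hγ₁ : 0 < γ₁) (hγ₂ : 0 < γ₂) (hγ₃ : 0 < γ₃) (hφ₁ : 0 < φ₁) (hφ₂ : 0 < φ₂)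
    (S₀ : ℝ) (hS₀ : S₀ = Λ / μ)
    (Rc : ℝ) (hRc : Rc = β * S₀ / (σ + ε + μ) *
      (σ / (α + μ) + σ * (1 - ρ) * α / ((α + μ) * (γ₂ + φ₂ + μ)) + ε * ω / (γ₃ + μ)))
    (F V : Matrix (Fin 5) (Fin 5) ℂ)
    (hFmat : F = !![0, ((β * S₀ : ℝ) : ℂ), 0, ((β * S₀ : ℝ) : ℂ), ((ω * β * S₀ : ℝ) : ℂ);
                    0, 0, 0, 0, 0;
                    0, 0, 0, 0, 0;
                    0, 0, 0, 0, 0;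
                    0, 0, 0, 0, 0])
    (hVmat : V = !![((σ + ε + μ : ℝ) : ℂ), 0, 0, 0, 0;
                    ((-σ : ℝ) : ℂ), ((α + μ : ℝ) : ℂ), 0, 0, 0;
                    0, ((-(ρ * α) : ℝ) : ℂ), ((γ₁ + φ₁ + μ : ℝ) : ℂ), 0, 0;
                    0, ((-((1 - ρ) * α) : ℝ) : ℂ), 0, ((γ₂ + φ₂ + μ : ℝ) : ℂ), 0;
                    ((-ε : ℝ) : ℂ), 0, 0, 0, ((γ₃ + μ : ℝ) : ℂ)]) :
    (Rc : ℂ) ∈ spectrum ℂ (F * V⁻¹) ∧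
    ∀ z ∈ spectrum ℂ (F * V⁻¹), ‖z‖ ≤ Rc := by
  have hS₀pos : 0 < S₀ := by rw [hS₀]; positivity
  have ha : (0:ℝ) < σ + ε + μ := by linarith
  have hb : (0:ℝ) < α + μ := by linarith
  have hc : (0:ℝ) < γ₁ + φ₁ + μ := by linarith
  have hd : (0:ℝ) < γ₂ + φ₂ + μ := by linarith
  have he : (0:ℝ) < γ₃ + μ := by linarith
  have ha' : ((σ + ε + μ : ℝ) : ℂ) ≠ 0 := by exact_mod_cast ha.ne'
  have hb' : ((α + μ : ℝ) : ℂ) ≠ 0 := by exact_mod_cast hb.ne'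
  have hc' : ((γ₁ + φ₁ + μ : ℝ) : ℂ) ≠ 0 := by exact_mod_cast hc.ne'
  have hd' : ((γ₂ + φ₂ + μ : ℝ) : ℂ) ≠ 0 := by exact_mod_cast hd.ne'
  have he' : ((γ₃ + μ : ℝ) : ℂ) ≠ 0 := by exact_mod_cast he.ne'
  have ha2 : (σ:ℂ) + (ε:ℂ) + (μ:ℂ) ≠ 0 := by exact_mod_cast ha.ne'
  have hb2 : (α:ℂ) + (μ:ℂ) ≠ 0 := by exact_mod_cast hb.ne'
  have hc2 : (γ₁:ℂ) + (φ₁:ℂ) + (μ:ℂ) ≠ 0 := by exact_mod_cast hc.ne'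
  have hd2 : (γ₂:ℂ) + (φ₂:ℂ) + (μ:ℂ) ≠ 0 := by exact_mod_cast hd.ne'
  have he2 : (γ₃:ℂ) + (μ:ℂ) ≠ 0 := by exact_mod_cast he.ne'
  set W : Matrix (Fin 5) (Fin 5) ℂ :=
    !![1/((σ + ε + μ : ℝ) : ℂ), 0, 0, 0, 0;
       (σ:ℂ)/(((σ + ε + μ : ℝ) : ℂ)*((α + μ : ℝ) : ℂ)), 1/((α + μ : ℝ) : ℂ), 0, 0, 0;
       (ρ:ℂ)*(α:ℂ)*(σ:ℂ)/(((σ + ε + μ : ℝ) : ℂ)*((α + μ : ℝ) : ℂ)*((γ₁ + φ₁ + μ : ℝ) : ℂ)),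
         (ρ:ℂ)*(α:ℂ)/(((α + μ : ℝ) : ℂ)*((γ₁ + φ₁ + μ : ℝ) : ℂ)), 1/((γ₁ + φ₁ + μ : ℝ) : ℂ), 0, 0;
       (1-(ρ:ℂ))*(α:ℂ)*(σ:ℂ)/(((σ + ε + μ : ℝ) : ℂ)*((α + μ : ℝ) : ℂ)*((γ₂ + φ₂ + μ : ℝ) : ℂ)),
         (1-(ρ:ℂ))*(α:ℂ)/(((α + μ : ℝ) : ℂ)*((γ₂ + φ₂ + μ : ℝ) : ℂ)), 0, 1/((γ₂ + φ₂ + μ : ℝ) : ℂ), 0;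
       (ε:ℂ)/(((σ + ε + μ : ℝ) : ℂ)*((γ₃ + μ : ℝ) : ℂ)), 0, 0, 0, 1/((γ₃ + μ : ℝ) : ℂ)] with hW
  have hVW : V * W = 1 := by
    rw [hVmat, hW]
    ext i j
    fin_cases i <;> fin_cases j <;>
      simp [Matrix.mul_apply, Fin.sum_univ_succ, Matrix.vecHead, Matrix.vecTail,
        Matrix.one_apply]
    all_goals (push_cast; field_simp; try ring)
  have hVinv : V⁻¹ = W := Matrix.inv_eq_right_inv hVW
  rw [hVinv]
  have hzero : ∀ i j : Fin 5, i ≠ 0 → (F * W) i j = 0 := by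
    intro i j hi
    rw [hFmat]
    fin_cases i
    · exact absurd rfl hi
    all_goals
      simp [Matrix.mul_apply, Fin.sum_univ_succ, Matrix.vecHead, Matrix.vecTail]
  have hreal : β*S₀*(σ/((σ+ε+μ)*(α+μ))) + β*S₀*((1-ρ)*α*σ/((σ+ε+μ)*(α+μ)*(γ₂+φ₂+μ)))
      + ω*β*S₀*(ε/((σ+ε+μ)*(γ₃+μ))) = Rc := by
    rw [hRc]
    have h1 := ha.ne'; have h2 := hb.ne'; have h3 := hd.ne'; have h4 := he.ne'
    field_simp
  have hC := congrArg (fun x : ℝ => (x : ℂ)) hreal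
  push_cast at hC
  have h00 : (F * W) 0 0 = (Rc : ℂ) := by
    rw [hFmat, hW]
    simp [Matrix.mul_apply, Fin.sum_univ_succ, Matrix.vecHead, Matrix.vecTail]
    push_cast
    linear_combination hC
  have hRcpos : 0 < Rc := by
    rw [hRc]
    have : 0 < 1 - ρ := by linarith
    positivity
  constructor
  · rw [spec_aux (F * W) hzero, h00]
    ring
  · intro z hz
    rw [spec_aux (F * W) hzero, h00] at hz
    rcases mul_eq_zero.mp hz with h | h
    · have : z = (Rc : ℂ) := by linear_combination h
      rw [this]
      simp [Complex.norm_real, abs_of_pos hRcpos]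
    · have : z = 0 := by
        have := pow_eq_zero_iff (n := 4) (by norm_num) |>.mp h
        exact this
      rw [this]
      simp [hRcpos.le]
end

section
/- If R_c ≤ 1, then the only nonnegative equilibrium of the SEIAR system is the disease-free equilibrium P₀ = (S₀, 0, 0, 0, 0, 0, 0); i.e., any equilibrium with E₁ ≥ 0 satisfies E₁·(β(σ+ε+μ)R_c·E₁ + Λβ(1 - R_c)) = 0, forcing E₁ = 0 when R_c ≤ 1 (since both factors are nonnegative and the second is positive unless R_c = 1 and E₁ = 0). -/
theorem only_disease_free_when_Rc_le_one
    (Λ μ β σ ε α ω ρ γ₁ γ₂ γ₃ φ₁ φ₂ : ℝ)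
    (hΛ : 0 < Λ) (hμ : 0 < μ) (hβ : 0 < β) (hσ : 0 < σ) (hε : 0 < ε)
    (hα : 0 < α) (hω : 0 < ω) (hρ : 0 < ρ) (hρ1 : ρ < 1)
    (hγ₁ : 0 < γ₁) (hγ₂ : 0 < γ₂) (hγ₃ : 0 < γ₃) (hφ₁ : 0 < φ₁) (hφ₂ : 0 < φ₂)
    (S₀ Rc : ℝ) (hS₀ : S₀ = Λ / μ)
    (hRc : Rc = β * S₀ / (σ + ε + μ) *
      (σ / (α + μ) + σ * (1 - ρ) * α / ((α + μ) * (γ₂ + φ₂ + μ)) + ε * ω / (γ₃ + μ)))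
    (hRcle : Rc ≤ 1)
    (S E₁ E₂ I₁ I₂ A R : ℝ)
    (hS : 0 ≤ S) (hE₁ : 0 ≤ E₁) (hE₂ : 0 ≤ E₂) (hI₁ : 0 ≤ I₁) (hI₂ : 0 ≤ I₂)
    (hA : 0 ≤ A) (hR : 0 ≤ R)
    (e1 : 0 = Λ - β * S * (E₂ + I₂ + ω * A) - μ * S)
    (e2 : 0 = β * S * (E₂ + I₂ + ω * A) - (σ + ε + μ) * E₁)
    (e3 : 0 = σ * E₁ - (α + μ) * E₂)
    (e4 : 0 = ρ * α * E₂ - (γ₁ + φ₁ + μ) * I₁)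
    (e5 : 0 = (1 - ρ) * α * E₂ - (γ₂ + φ₂ + μ) * I₂)
    (e6 : 0 = ε * E₁ - (γ₃ + μ) * A)
    (e7 : 0 = γ₁ * I₁ + γ₂ * I₂ + γ₃ * A - μ * R) :
    E₁ * (β * (σ + ε + μ) * Rc * E₁ + Λ * β * (1 - Rc)) = 0 ∧
    S = S₀ ∧ E₁ = 0 ∧ E₂ = 0 ∧ I₁ = 0 ∧ I₂ = 0 ∧ A = 0 ∧ R = 0 := by
  have hD0 : 0 < σ + ε + μ := by linarith
  have hD1 : 0 < α + μ := by linarith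
  have hD2 : 0 < γ₂ + φ₂ + μ := by linarith
  have hD3 : 0 < γ₃ + μ := by linarith
  have hD4 : 0 < γ₁ + φ₁ + μ := by linarith
  have hρ' : 0 < 1 - ρ := by linarith
  set K : ℝ := σ / (α + μ) + σ * (1 - ρ) * α / ((α + μ) * (γ₂ + φ₂ + μ)) + ε * ω / (γ₃ + μ)
    with hKdef
  clear_value K
  have hK : 0 < K := by rw [hKdef]; positivity
  -- express E₂, I₂, A in terms of E₁
  have hE2 : E₂ = σ * E₁ / (α + μ) := by field_simp; linarith
  have hI2 : I₂ = (1 - ρ) * α * E₂ / (γ₂ + φ₂ + μ) := by field_simp; linarith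
  have hAe : A = ε * E₁ / (γ₃ + μ) := by field_simp; linarith
  have hsumK : E₂ + I₂ + ω * A = K * E₁ := by
    rw [hE2, hI2, hAe, hKdef, hE2]
    field_simp
  have hμS : μ * S = Λ - (σ + ε + μ) * E₁ := by linarith
  have hE1z : E₁ = 0 := by
    by_contra h
    have hpos : 0 < E₁ := lt_of_le_of_ne hE₁ (Ne.symm h)
    have hcancel : β * S * K = σ + ε + μ := by
      have hx : β * S * K * E₁ = (σ + ε + μ) * E₁ := by
        rw [mul_assoc, ← hsumK]; linarith
      exact mul_right_cancel₀ h hx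
    have hβK : 0 < β * K := mul_pos hβ hK
    have h1 : (β * K) * S = σ + ε + μ := by linear_combination hcancel
    have hSlt : S < Λ / μ := by
      rw [lt_div_iff₀ hμ]
      have := mul_pos hD0 hpos
      have hc : S * μ = μ * S := mul_comm S μ
      linarith
    -- Rc ≤ 1 means β * (Λ/μ) * K ≤ σ+ε+μ
    have hRcval : Rc = β * (Λ / μ) * K / (σ + ε + μ) := by
      rw [hRc, hS₀, hKdef]; ring
    have hle : β * (Λ / μ) * K ≤ σ + ε + μ := by
      rw [hRcval, div_le_one hD0] at hRcle
      exact hRcle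
    have hlt : (β * K) * S < (β * K) * (Λ / μ) := by
      exact mul_lt_mul_of_pos_left hSlt hβK
    have h2 : (β * K) * (Λ / μ) = β * (Λ / μ) * K := by ring
    linarith
  have hE2z : E₂ = 0 := by rw [hE2, hE1z]; simp
  have hAz : A = 0 := by rw [hAe, hE1z]; simp
  have hI2z : I₂ = 0 := by rw [hI2, hE2z]; simp
  have hI1z : I₁ = 0 := by
    have : (γ₁ + φ₁ + μ) * I₁ = 0 := by rw [hE2z] at e4; linarith
    exact (mul_eq_zero.mp this).resolve_left (ne_of_gt hD4)
  have hRz : R = 0 := by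
    have : μ * R = 0 := by rw [hI1z, hI2z, hAz] at e7; linarith
    exact (mul_eq_zero.mp this).resolve_left (ne_of_gt hμ)
  have hSz : S = S₀ := by
    rw [hS₀]
    rw [hE1z] at hμS
    field_simp
    linarith
  refine ⟨by rw [hE1z]; ring, hSz, hE1z, hE2z, hI1z, hI2z, hAz, hRz⟩
end
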